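/- arXiv:2508.03930 — 2 statements merged into one kernel-verified Lean document; each statement's English description precedes it below -/
import Mathlib

section
/- If F and F' are two distinct neighboring runs in a string T with the same period p, then their overlap satisfies |F ∩ F'| ≤ p - 1. -/
open List

variable {α : Type*}

/-- `frag T a b` is the fragment `T[a..b]` (inclusive, 0-based). -/
def frag (T : List α) (a b : ℕ) : List α := (T.drop a).take (b + 1 - a)

/-- `p` is a period of `S`: `0 < p ≤ |S|` and `S[i] = S[i+p]` for all valid `i`. -/
def IsPeriodOf (p : ℕ) (S : List α) : Prop :=
  0 < p ∧ p ≤ S.length ∧ ∀ i : ℕ, i + p < S.length → S[i]? = S[i + p]?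

/-- The smallest period of `S`. -/
noncomputable def minPeriod (S : List α) : ℕ := sInf {p | IsPeriodOf p S}

/-- `T[a..b]` is a run: periodic (its smallest period occurs at least twice)
and maximal on both sides. -/
def IsRun (T : List α) (a b : ℕ) : Prop :=
  a ≤ b ∧ b < T.length ∧
  2 * minPeriod (frag T a b) ≤ b + 1 - a ∧
  (a = 0 ∨ T[a - 1]? ≠ T[a - 1 + minPeriod (frag T a b)]?) ∧
  (b = T.length - 1 ∨ T[b + 1]? ≠ T[b + 1 - minPeriod (frag T a b)]?)

/-- `W` occurs in `T` at position `s`. -/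
def OccursAt (T : List α) (s : ℕ) (W : List α) : Prop :=
  s + W.length ≤ T.length ∧ (T.drop s).take W.length = W

/-- The set of distinct square substrings of `T`. -/
def Squares (T : List α) : Set (List α) :=
  {W | ∃ X : List α, X ≠ [] ∧ W = X ++ X ∧ W <:+: T}

/-- A non-empty string is primitive if it is not a proper power. -/
def Primitive (U : List α) : Prop :=
  U ≠ [] ∧ ∀ (V : List α) (k : ℕ), U = (List.replicate k V).flatten → k = 1

/-- Cyclic rotation moving the first `c` characters to the end. -/
def rot (c : ℕ) (L : List α) : List α := L.drop c ++ L.take c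

/-- `lam` is the Lyndon root of a periodic string `S`: the lexicographically
smallest rotation of `S[0..per(S))`. -/
def LyndonRootOf [LinearOrder α] (S lam : List α) : Prop :=
  (∃ c < minPeriod S, lam = rot c (S.take (minPeriod S))) ∧
  ∀ c < minPeriod S, lam ≤ rot c (S.take (minPeriod S))

/-- Squares generated by a periodic string `U`: squares contained in `U`
whose smallest period equals that of `U`. -/
def FragSquares (U : List α) : Set (List α) :=
  {W | ∃ X : List α, X ≠ [] ∧ W = X ++ X ∧ W <:+: U ∧ minPeriod W = minPeriod U}

/-- `subper U`: the minimum of `per(X)` over squares `X²` generated by `U`. -/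
noncomputable def subper (U : List α) : ℕ :=
  sInf {q | ∃ X : List α, X ≠ [] ∧ (X ++ X) <:+: U ∧
    minPeriod (X ++ X) = minPeriod U ∧ minPeriod X = q}

/-- Fragments `[a..b]` and `[a'..b']` are neighboring:
`[a-1..b+1] ∩ [a'..b'] ≠ ∅`. -/
def Neighboring (a b a' b' : ℕ) : Prop := a ≤ b' + 1 ∧ a' ≤ b + 1

/-- `T[x..y]` is a layer of the pyramid of the neighboring runs
`F = T[a..b]` and `F' = T[a'..b']` (with `a < a'`): a subperiodic run `R`
with `subper(R) = per(F)` such that `R ∩ (F ∪ F')` is periodic with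
period `per(R)`. -/
def IsLayer (T : List α) (a b a' b' x y : ℕ) : Prop :=
  IsRun T x y ∧
  4 * subper (frag T x y) ≤ minPeriod (frag T x y) ∧
  subper (frag T x y) = minPeriod (frag T a b) ∧
  2 * minPeriod (frag T x y) ≤ min y b' + 1 - max x a ∧
  IsPeriodOf (minPeriod (frag T x y)) (frag T (max x a) (min y b'))

/-- A `τ`-synchronizing set of `T` (Kempa–Kociumaka): consistency and density. -/
def SyncSet (T : List α) (τ : ℕ) (S : Set ℕ) : Prop :=
  (∀ i ∈ S, i + 2 * τ ≤ T.length) ∧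
  (∀ i j : ℕ, i + 2 * τ ≤ T.length → j + 2 * τ ≤ T.length →
    (T.drop i).take (2 * τ) = (T.drop j).take (2 * τ) → (i ∈ S ↔ j ∈ S)) ∧
  (∀ i : ℕ, i + 3 * τ - 1 ≤ T.length →
    ((∀ k ∈ S, k < i ∨ i + τ ≤ k) ↔
      3 * minPeriod ((T.drop i).take (3 * τ - 1)) ≤ τ))

/-! Both runs have the same period `p`, so no periodicity lemma is needed: if they overlapped on
`p` positions, the `p`-periodicity of each would reach one position past the other's boundary,
which maximality of the other forbids. Hence both ends coincide. -/

lemma length_frag {T : List α} {a b : ℕ} (hb : b < T.length) :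
    (frag T a b).length = b + 1 - a := by
  simp only [frag, length_take, length_drop]
  omega

lemma getElem?_frag (T : List α) {a b j : ℕ} (hj : j < b + 1 - a) :
    (frag T a b)[j]? = T[a + j]? := by
  rw [frag, getElem?_take_of_lt hj, getElem?_drop]

lemma isPeriodOf_minPeriod {S : List α} (hS : S ≠ []) : IsPeriodOf (minPeriod S) S :=
  Nat.sInf_mem (s := {p | IsPeriodOf p S})
    ⟨S.length, length_pos_iff.mpr hS, le_rfl, fun _ hi => absurd hi (by omega)⟩

lemma IsPeriodOf.getElem?_add_of_frag {T : List α} {a b p i : ℕ} (hb : b < T.length)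
    (hP : IsPeriodOf p (frag T a b)) (hai : a ≤ i) (hib : i + p ≤ b) :
    T[i]? = T[i + p]? := by
  have h := hP.2.2 (i - a) (by rw [length_frag hb]; omega)
  rwa [getElem?_frag T (by omega), getElem?_frag T (by omega),
    show a + (i - a) = i by omega, show a + (i - a + p) = i + p by omega] at h

namespace IsRun

variable {T : List α} {a b x y p : ℕ}

lemma isPeriodOf_minPeriod (h : IsRun T a b) : IsPeriodOf (minPeriod (frag T a b)) (frag T a b) :=
  _root_.isPeriodOf_minPeriod <| ne_nil_of_length_pos <| by
    rw [length_frag h.2.1]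
    exact Nat.sub_pos_of_lt (Nat.lt_succ_of_le h.1)

lemma start_le_of_isPeriodOf (h : IsRun T a b) (hp : minPeriod (frag T a b) = p)
    (hy : y < T.length) (hP : IsPeriodOf p (frag T x y)) (hcover : a + p ≤ y + 1) :
    a ≤ x := by
  by_contra! hxa
  rcases h.2.2.2.1 with ha | hmax
  · omega
  · exact hmax (hp ▸ hP.getElem?_add_of_frag hy (by omega) (by omega))

lemma le_end_of_isPeriodOf (h : IsRun T a b) (hp : minPeriod (frag T a b) = p)
    (hy : y < T.length) (hP : IsPeriodOf p (frag T x y)) (hcover : x + p ≤ b + 1) :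
    y ≤ b := by
  by_contra! hby
  rcases h.2.2.2.2 with hb | hmax
  · omega
  · have := hP.getElem?_add_of_frag hy (i := b + 1 - p) (by omega) (by omega)
    rw [Nat.sub_add_cancel (by omega)] at this
    exact hmax (hp ▸ this.symm)

end IsRun

theorem overlap_of_neighboring_runs_general (T : List α) (a b a' b' p : ℕ)
    (h1 : IsRun T a b) (h2 : IsRun T a' b')
    (hp1 : minPeriod (frag T a b) = p) (hp2 : minPeriod (frag T a' b') = p)
    (hne : (a, b) ≠ (a', b')) :
    min b b' + 1 - max a a' ≤ p - 1 := by
  have hP : IsPeriodOf p (frag T a b) := hp1 ▸ h1.isPeriodOf_minPeriod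
  have hP' : IsPeriodOf p (frag T a' b') := hp2 ▸ h2.isPeriodOf_minPeriod
  have hp0 : 0 < p := hP.1
  by_contra! hlong
  have hstart : a = a' := le_antisymm
    (h1.start_le_of_isPeriodOf hp1 h2.2.1 hP' (by omega))
    (h2.start_le_of_isPeriodOf hp2 h1.2.1 hP (by omega))
  have hend : b = b' := le_antisymm
    (h2.le_end_of_isPeriodOf hp2 h1.2.1 hP (by omega))
    (h1.le_end_of_isPeriodOf hp1 h2.2.1 hP' (by omega))
  exact hne (by rw [hstart, hend])

/-- Two distinct neighboring runs with the same period `p` overlap on at most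
`p - 1` positions. -/
theorem overlap_of_neighboring_runs (T : List α) (a b a' b' p : ℕ)
    (h1 : IsRun T a b) (h2 : IsRun T a' b')
    (hp1 : minPeriod (frag T a b) = p) (hp2 : minPeriod (frag T a' b') = p)
    (hne : (a, b) ≠ (a', b'))
    (hnb : Neighboring a b a' b') :
    min b b' + 1 - max a a' ≤ p - 1 :=
  overlap_of_neighboring_runs_general T a b a' b' p h1 h2 hp1 hp2 hne
end

section
/- Let F, F' be two neighboring runs of equal period p in T with F to the left of F', let R be a run with subper(R) = p such that R ∩ (F ∪ F') is periodic with period per(R) (a layer of the pyramid P(F,F')), and let U^2 be a square generated by R ∩ (F ∪ F'). Then the first half of U^2 is contained in F and the second half is contained in F'. -/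
open List

variable {α : Type*}

/-!
Write `p` for the common period of `F` and `F'`, `q = per(R)` and `L = |U|`. The fragment
`R ∩ (F ∪ F')` has length at least `2q` and period `q`, so by the periodicity lemma its smallest
period is `q` (a smaller one would spread to all of `R`). Hence `per(U²) = q ≥ 4p`: in particular
`L ≥ 4p` and `U²` is not `p`-periodic. If the first half of `U²` reached past the end of `F`, the
second half would lie in `F'`, so both halves would be `p`-periodic; then either the first half
covers the end of `F` together with the `p` positions before it, contradicting the maximality of
`F`, or it overlaps `F'` by at least `p` and all of `U²` is `p`-periodic. The second half is
symmetric.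
-/

/-- Positions are half-open `[i, j)`, unlike the inclusive `frag T a b`. -/
def PeriodicOn (T : List α) (p i j : ℕ) : Prop :=
  ∀ k, i ≤ k → k + p < j → T[k]? = T[k + p]?

section PeriodicOn

variable {T : List α} {p q q' i j i' j' : ℕ}

theorem PeriodicOn.mono (h : PeriodicOn T p i j) (hi : i ≤ i') (hj : j' ≤ j) :
    PeriodicOn T p i' j' :=
  fun k hk hkj => h k (hi.trans hk) (by omega)

theorem PeriodicOn.union (h : PeriodicOn T p i j) (h' : PeriodicOn T p i' j')
    (hoverlap : i' + p ≤ j) : PeriodicOn T p i j' := by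
  intro k hk hkj
  by_cases hkp : k + p < j
  · exact h k hk hkp
  · exact h' k (by omega) hkj

theorem periodicOn_iff_periodicOn_add {L : ℕ} (hL : PeriodicOn T L i (j + L)) :
    PeriodicOn T p i j ↔ PeriodicOn T p (i + L) (j + L) := by
  constructor
  · intro h k hk hkj
    have e₁ := hL (k - L) (by omega) (by omega)
    have e₂ := hL (k - L + p) (by omega) (by omega)
    rw [Nat.sub_add_cancel (by omega)] at e₁
    rw [show k - L + p + L = k + p by omega] at e₂
    rw [← e₁, ← e₂]
    exact h (k - L) (by omega) (by omega)
  · intro h k hk hkj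
    rw [hL k hk (by omega), hL (k + p) (by omega) (by omega), Nat.add_right_comm]
    exact h (k + L) (by omega) (by omega)

theorem PeriodicOn.extend_right {m n y : ℕ} (hq : PeriodicOn T q m y) (hq' : PeriodicOn T q' m n)
    (hlen : m + q + q' ≤ n) (hq0 : 0 < q) : PeriodicOn T q' m y := by
  intro k
  induction k using Nat.strong_induction_on with
  | _ k ih =>
    intro hmk hky
    by_cases hkn : k + q' < n
    · exact hq' k hmk hkn
    · have e₁ := hq (k - q) (by omega) (by omega)
      have e₂ := hq (k - q + q') (by omega) (by omega)
      rw [Nat.sub_add_cancel (by omega)] at e₁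
      rw [show k - q + q' + q = k + q' by omega] at e₂
      rw [← e₁, ← e₂]
      exact ih (k - q) (by omega) (by omega) (by omega)

theorem PeriodicOn.extend_left {x m n : ℕ} (hq : PeriodicOn T q x n) (hq' : PeriodicOn T q' m n)
    (hlen : m + q + q' ≤ n) (hq0 : 0 < q) : PeriodicOn T q' x n := by
  suffices ∀ d k, m - k = d → x ≤ k → k + q' < n → T[k]? = T[k + q']? from
    fun k hk hkn => this _ k rfl hk hkn
  intro d
  induction d using Nat.strong_induction_on with
  | _ d ih =>
    intro k hd hxk hkn
    by_cases hmk : m ≤ k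
    · exact hq' k hmk hkn
    · rw [hq k hxk (by omega), hq (k + q') (by omega) (by omega), Nat.add_right_comm]
      exact ih (m - (k + q)) (by omega) (k + q) rfl (by omega) (by omega)

/-- The periodicity lemma in the form used here: positions outside the window `[m, n)` are reached
by steps of `q` from inside it, and the window is long enough for those steps to carry `q'`. -/
theorem PeriodicOn.extend {x y m n : ℕ} (hq : PeriodicOn T q x y) (hq' : PeriodicOn T q' m n)
    (hxm : x ≤ m) (hny : n ≤ y) (hlen : m + q + q' ≤ n) (hq0 : 0 < q) :
    PeriodicOn T q' x y :=
  hq.extend_left ((hq.mono hxm le_rfl).extend_right hq' hlen hq0) (by omega) hq0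

end PeriodicOn

section MinPeriod

variable {S : List α} {r : ℕ}

theorem minPeriod_isPeriodOf (hS : S ≠ []) : IsPeriodOf (minPeriod S) S :=
  Nat.sInf_mem (⟨S.length, List.length_pos_iff.mpr hS, le_rfl, fun _ hi => absurd hi (by omega)⟩ :
    ∃ r, IsPeriodOf r S)

theorem minPeriod_le (h : IsPeriodOf r S) : minPeriod S ≤ r :=
  Nat.sInf_le h

theorem isPeriodOf_length_append_self {U : List α} (hU : U ≠ []) :
    IsPeriodOf U.length (U ++ U) := by
  refine ⟨List.length_pos_iff.mpr hU, by simp, fun i hi => ?_⟩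
  rw [List.length_append] at hi
  rw [List.getElem?_append_left (by omega), List.getElem?_append_right (by omega),
    Nat.add_sub_cancel]

end MinPeriod

section Occurrence

variable {T W : List α} {s r : ℕ}

theorem OccursAt.getElem?_add (h : OccursAt T s W) {i : ℕ} (hi : i < W.length) :
    T[s + i]? = W[i]? := by
  rw [← h.2, List.getElem?_take_of_lt hi, List.getElem?_drop]

theorem OccursAt.isPeriodOf_iff (h : OccursAt T s W) :
    IsPeriodOf r W ↔ 0 < r ∧ r ≤ W.length ∧ PeriodicOn T r s (s + W.length) := by
  refine and_congr_right fun _ => and_congr_right fun _ => ⟨fun hW k hk hkr => ?_, fun hT i hi => ?_⟩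
  · have e := hW (k - s) (by omega)
    rwa [← h.getElem?_add (by omega), ← h.getElem?_add (by omega), Nat.add_sub_cancel' hk,
      ← Nat.add_assoc, Nat.add_sub_cancel' hk] at e
  · rw [← h.getElem?_add (by omega), ← h.getElem?_add hi, ← Nat.add_assoc]
    exact hT (s + i) (by omega) (by omega)

theorem length_frag_s7 {u v : ℕ} (hv : v < T.length) :
    (frag T u v).length = v + 1 - u := by
  simp [frag]
  omega

theorem occursAt_frag {u v : ℕ} (huv : u ≤ v) (hv : v < T.length) : OccursAt T u (frag T u v) :=
  ⟨by rw [length_frag_s7 hv]; omega, by rw [length_frag_s7 hv]; rfl⟩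

theorem isPeriodOf_frag_iff {u v : ℕ} (huv : u ≤ v) (hv : v < T.length) :
    IsPeriodOf r (frag T u v) ↔ 0 < r ∧ r ≤ v + 1 - u ∧ PeriodicOn T r u (v + 1) := by
  rw [(occursAt_frag huv hv).isPeriodOf_iff, length_frag_s7 hv,
    show u + (v + 1 - u) = v + 1 by omega]

theorem frag_ne_nil {u v : ℕ} (huv : u ≤ v) (hv : v < T.length) : frag T u v ≠ [] := by
  rw [← List.length_pos_iff, length_frag_s7 hv]
  omega

end Occurrence

theorem minPeriod_frag_eq_of_isPeriodOf {T : List α} {x y m n : ℕ} (hxm : x ≤ m) (hmn : m ≤ n)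
    (hny : n ≤ y) (hy : y < T.length)
    (hper : IsPeriodOf (minPeriod (frag T x y)) (frag T m n))
    (hlong : 2 * minPeriod (frag T x y) ≤ n + 1 - m) :
    minPeriod (frag T m n) = minPeriod (frag T x y) := by
  have hn : n < T.length := by omega
  have hxy : x ≤ y := by omega
  refine le_antisymm (minPeriod_le hper) (not_lt.mp fun hlt => ?_)
  obtain ⟨hq0, -, hqxy⟩ :=
    (isPeriodOf_frag_iff hxy hy).1 (minPeriod_isPeriodOf (frag_ne_nil hxy hy))
  obtain ⟨hq'0, hq'len, hq'mn⟩ :=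
    (isPeriodOf_frag_iff hmn hn).1 (minPeriod_isPeriodOf (frag_ne_nil hmn hn))
  have hper' : IsPeriodOf (minPeriod (frag T m n)) (frag T x y) :=
    (isPeriodOf_frag_iff hxy hy).2
      ⟨hq'0, by omega, hqxy.extend hq'mn hxm (by omega) (by omega) hq0⟩
  exact absurd (minPeriod_le hper') (not_le.mpr hlt)

section Run

variable {T : List α} {a b i j : ℕ}

theorem IsRun.periodicOn (hR : IsRun T a b) : PeriodicOn T (minPeriod (frag T a b)) a (b + 1) :=
  ((isPeriodOf_frag_iff hR.1 hR.2.1).1 (minPeriod_isPeriodOf (frag_ne_nil hR.1 hR.2.1))).2.2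

theorem IsRun.minPeriod_pos (hR : IsRun T a b) : 0 < minPeriod (frag T a b) :=
  (minPeriod_isPeriodOf (frag_ne_nil hR.1 hR.2.1)).1

theorem IsRun.periodicOn_end_le (hR : IsRun T a b)
    (h : PeriodicOn T (minPeriod (frag T a b)) i j) (hi : i + minPeriod (frag T a b) ≤ b + 1) :
    j ≤ b + 1 := by
  by_contra! hj
  have hp := hR.minPeriod_pos
  have e := h (b + 1 - minPeriod (frag T a b)) (by omega) (by omega)
  rw [Nat.sub_add_cancel (by omega)] at e
  rcases hR.2.2.2.2 with hend | hne
  · have hb := hR.2.1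
    have hlt : b + 1 - minPeriod (frag T a b) < T.length := by omega
    rw [List.getElem?_eq_getElem hlt, List.getElem?_eq_none (by omega)] at e
    exact Option.some_ne_none _ e
  · exact hne e.symm

theorem IsRun.le_periodicOn_start (hR : IsRun T a b)
    (h : PeriodicOn T (minPeriod (frag T a b)) i j) (hj : a + minPeriod (frag T a b) ≤ j) :
    a ≤ i := by
  by_contra! hi
  rcases hR.2.2.2.1 with ha | hne
  · omega
  · exact hne (h (a - 1) (by omega) (by omega))

end Run

section Square

variable {T : List α} {a b a' b' s L p : ℕ}

theorem square_fst_half_end_le (hF : IsRun T a b) (hp : minPeriod (frag T a b) = p)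
    (hF' : PeriodicOn T p a' (b' + 1)) (hnb : a' ≤ b + 1)
    (hsq : PeriodicOn T L s (s + 2 * L)) (hs : s + 2 * L ≤ b' + 1) (hL : 2 * p ≤ L)
    (hnot : ¬ PeriodicOn T p s (s + 2 * L)) : s + L ≤ b + 1 := by
  by_contra! hlt
  have hsq' : PeriodicOn T L s (s + L + L) := by rwa [Nat.add_assoc, ← Nat.two_mul]
  have hsnd : PeriodicOn T p (s + L) (s + L + L) := hF'.mono (by omega) (by omega)
  have hfst : PeriodicOn T p s (s + L) := (periodicOn_iff_periodicOn_add hsq').2 hsnd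
  by_cases hstart : s + p ≤ b + 1
  · subst hp
    exact absurd (hF.periodicOn_end_le hfst hstart) (by omega)
  · exact hnot ((hfst.union hF' (by omega)).mono le_rfl hs)

theorem le_square_snd_half_start (hF' : IsRun T a' b') (hp : minPeriod (frag T a' b') = p)
    (hF : PeriodicOn T p a (b + 1)) (hnb : a' ≤ b + 1)
    (hsq : PeriodicOn T L s (s + 2 * L)) (has : a ≤ s) (hL : 2 * p ≤ L)
    (hnot : ¬ PeriodicOn T p s (s + 2 * L)) : a' ≤ s + L := by
  by_contra! hlt
  have hsq' : PeriodicOn T L s (s + L + L) := by rwa [Nat.add_assoc, ← Nat.two_mul]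
  have hfst : PeriodicOn T p s (s + L) := hF.mono has (by omega)
  have hsnd : PeriodicOn T p (s + L) (s + L + L) := (periodicOn_iff_periodicOn_add hsq').1 hfst
  by_cases hend : a' + p ≤ s + L + L
  · subst hp
    exact absurd (hF'.le_periodicOn_start hsnd hend) (by omega)
  · exact hnot ((hF.union hsnd (by omega)).mono has (by omega))

end Square

theorem layer_square_halves_general (T : List α) (a b a' b' x y p : ℕ) (U : List α) (s : ℕ)
    (h1 : IsRun T a b) (h2 : IsRun T a' b')
    (hnb : Neighboring a b a' b')
    (hp1 : minPeriod (frag T a b) = p) (hp2 : minPeriod (frag T a' b') = p)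
    (hl : IsLayer T a b a' b' x y)
    (hU : U ≠ [])
    (hocc : OccursAt T s (U ++ U))
    (hin : max x a ≤ s ∧ s + 2 * U.length ≤ min y b' + 1)
    (hgen : minPeriod (U ++ U) = minPeriod (frag T (max x a) (min y b'))) :
    a ≤ s ∧ s + U.length ≤ b + 1 ∧ a' ≤ s + U.length ∧ s + 2 * U.length ≤ b' + 1 := by
  obtain ⟨hR, hsub, hsubp, hlong, hperR⟩ := hl
  have hp0 : 0 < p := hp1 ▸ h1.minPeriod_pos
  have hq0 := hR.minPeriod_pos
  have hUU : (U ++ U).length = 2 * U.length := by rw [List.length_append, Nat.two_mul]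
  have hqU : minPeriod (U ++ U) = minPeriod (frag T x y) :=
    hgen.trans (minPeriod_frag_eq_of_isPeriodOf (le_max_left x a) (by omega) (min_le_left y b')
      hR.2.1 hperR hlong)
  have hpL : 4 * p ≤ U.length := by
    have := minPeriod_le (isPeriodOf_length_append_self hU)
    omega
  have hsq : PeriodicOn T U.length s (s + 2 * U.length) := by
    have := (hocc.isPeriodOf_iff.1 (isPeriodOf_length_append_self hU)).2.2
    rwa [hUU] at this
  have hnot : ¬ PeriodicOn T p s (s + 2 * U.length) := fun h => by
    have := minPeriod_le (hocc.isPeriodOf_iff.2 ⟨hp0, by omega, hUU ▸ h⟩)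
    omega
  refine ⟨by omega, ?_, ?_, by omega⟩
  · exact square_fst_half_end_le h1 hp1 (hp2 ▸ h2.periodicOn) hnb.2 hsq (by omega) (by omega) hnot
  · exact le_square_snd_half_start h2 hp2 (hp1 ▸ h1.periodicOn) hnb.2 hsq (by omega) (by omega)
      hnot

/-- For a square `U²` generated by `R ∩ (F ∪ F')` where `R` is a layer of the
pyramid of neighboring equal-period runs `F = T[a..b]`, `F' = T[a'..b']`
(`a < a'`), the first half of `U²` lies in `F` and the second half in `F'`. -/
theorem layer_square_halves (T : List α) (a b a' b' x y p : ℕ) (U : List α) (s : ℕ)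
    (hab : a < a')
    (h1 : IsRun T a b) (h2 : IsRun T a' b')
    (hnb : Neighboring a b a' b')
    (hp1 : minPeriod (frag T a b) = p) (hp2 : minPeriod (frag T a' b') = p)
    (hl : IsLayer T a b a' b' x y)
    (hU : U ≠ [])
    (hocc : OccursAt T s (U ++ U))
    (hin : max x a ≤ s ∧ s + 2 * U.length ≤ min y b' + 1)
    (hgen : minPeriod (U ++ U) = minPeriod (frag T (max x a) (min y b'))) :
    a ≤ s ∧ s + U.length ≤ b + 1 ∧ a' ≤ s + U.length ∧ s + 2 * U.length ≤ b' + 1 :=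
  layer_square_halves_general T a b a' b' x y p U s h1 h2 hnb hp1 hp2 hl hU hocc hin hgen
end
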